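/- arXiv:2302.12741 — 3 statements merged into one kernel-verified Lean document; each statement's English description precedes it below -/
import Mathlib

section
/- For every n and k, the number of Catalan words of length n with exactly k descents avoiding the pattern pair (≥, <) equals binom(n, 2k+1). Equivalently, the bivariate generating function ∑ x^{|w|} y^{des(w)} over such words equals (1 − x + x² − x²y)/(1 − 2x + x² − x²y). -/
/-- A Catalan word: first letter is 0 and each letter is at most the previous plus one. -/
def IsCatalanWord (w : List ℕ) : Prop :=
  (0 < w.length → w.getD 0 0 = 0) ∧
  ∀ i, i + 1 < w.length → w.getD (i + 1) 0 ≤ w.getD i 0 + 1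

/-- `w` avoids the consecutive pattern pair `(X, Y)`. -/
def AvoidsPair (X Y : ℕ → ℕ → Prop) (w : List ℕ) : Prop :=
  ∀ i, i + 2 < w.length →
    ¬ (X (w.getD i 0) (w.getD (i + 1) 0) ∧ Y (w.getD (i + 1) 0) (w.getD (i + 2) 0))

/-- Number of descents of `w`. -/
def descents (w : List ℕ) : ℕ :=
  ((Finset.range (w.length - 1)).filter (fun i => w.getD (i + 1) 0 < w.getD i 0)).card

/-- Catalan words of length `n` avoiding `(X,Y)`. -/
def CW (n : ℕ) (X Y : ℕ → ℕ → Prop) : Set (List ℕ) :=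
  {w | w.length = n ∧ IsCatalanWord w ∧ AvoidsPair X Y w}

lemma getD_range' (m i : ℕ) (h : i < m) : (List.range m).getD i 0 = i := by
  rw [List.getD_eq_getElem _ _ (by simpa using h)]
  simp

lemma getD_prefix (m : ℕ) (t : List ℕ) (i : ℕ) :
    (List.range (m+1) ++ t).getD i 0 = if i ≤ m then i else t.getD (i - (m+1)) 0 := by
  by_cases h : i ≤ m
  · rw [List.getD_append _ _ _ _ (by simpa using Nat.lt_succ_of_le h), getD_range' _ _ (Nat.lt_succ_of_le h), if_pos h]
  · rw [List.getD_append_right _ _ _ _ (by simpa using Nat.not_le.mp h), if_neg h]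
    simp

lemma chain'_ge_iff (l : List ℕ) :
    List.Chain' (· ≥ ·) l ↔ ∀ i, i + 1 < l.length → l.getD (i+1) 0 ≤ l.getD i 0 := by
  unfold List.Chain'
  rw [List.isChain_iff_getElem]
  constructor
  · intro h i hi
    have h1 : i < l.length - 1 := by omega
    have := h i hi
    simp only [List.getD_eq_getElem _ _ (show i < l.length by omega),
      List.getD_eq_getElem _ _ hi, ge_iff_le, List.get_eq_getElem] at *
    exact this
  · intro h i hi
    have hi' : i + 1 < l.length := by omega
    have := h i (by omega)
    simp only [List.getD_eq_getElem _ _ (show i < l.length by omega),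
      List.getD_eq_getElem _ _ hi', ge_iff_le, List.get_eq_getElem] at *
    exact this

lemma descents_cons (a : ℕ) (l : List ℕ) :
    descents (a :: l) = descents l + (if 0 < l.length ∧ l.getD 0 0 < a then 1 else 0) := by
  match l with
  | [] => simp [descents]
  | b :: l' =>
    unfold descents
    rw [Finset.card_filter, Finset.card_filter]
    simp only [List.length_cons, Nat.add_sub_cancel]
    rw [Finset.sum_range_succ' (fun i => if (a :: b :: l').getD (i + 1) 0 < (a :: b :: l').getD i 0 then 1 else 0)]
    have h1 : ∀ i, (a :: b :: l').getD (i+1) 0 = (b :: l').getD i 0 := fun i => rfl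
    simp only [h1]
    simp only [List.getD_cons_zero, List.getD_cons_succ]
    congr 1
    simp
lemma sum_range_add (f : ℕ → ℕ) (a b : ℕ) :
    ∑ i ∈ Finset.range (a+b), f i = ∑ i ∈ Finset.range a, f i + ∑ j ∈ Finset.range b, f (a+j) := by
  have h1 : Finset.range (a+b) = Finset.Ico 0 (a+b) := by rw [Finset.range_eq_Ico]
  have h2 : Finset.range a = Finset.Ico 0 a := by rw [Finset.range_eq_Ico]
  rw [h1, h2, ← Finset.sum_Ico_consecutive f (Nat.zero_le a) (Nat.le_add_right a b),
    Finset.sum_Ico_eq_sum_range f a (a+b), Nat.add_sub_cancel_left]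

lemma getD_prefix' (m : ℕ) (t : List ℕ) (j : ℕ) :
    (List.range (m+1) ++ t).getD (m + j) 0 = (m :: t).getD j 0 := by
  rw [getD_prefix]
  cases j with
  | zero => simp
  | succ j' =>
    rw [if_neg (by omega)]
    simp only [List.getD_cons_succ]
    congr 1
    omega

lemma descents_append (m : ℕ) (t : List ℕ) :
    descents (List.range (m+1) ++ t) = descents (m :: t) := by
  unfold descents
  rw [Finset.card_filter, Finset.card_filter]
  have hl : (List.range (m+1) ++ t).length - 1 = m + t.length := by simp
  rw [hl]
  rw [sum_range_add]
  have h0 : ∀ i ∈ Finset.range m,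
      (if (List.range (m+1) ++ t).getD (i + 1) 0 < (List.range (m+1) ++ t).getD i 0 then 1 else 0) = 0 := by
    intro i hi
    simp only [Finset.mem_range] at hi
    have h1 : i + 1 ≤ m := hi
    simp only [getD_prefix, if_pos h1, if_pos hi.le]
    rw [if_neg (by omega)]
  rw [Finset.sum_congr rfl h0, Finset.sum_const, smul_zero, zero_add]
  have hl2 : (m :: t).length - 1 = t.length := by simp
  rw [hl2]
  apply Finset.sum_congr rfl
  intro j _
  rw [show m + j + 1 = m + (j+1) by ring, getD_prefix', getD_prefix']
def D : ℕ → ℕ → ℕ → Finset (List ℕ)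
  | _, 0, k => if k = 0 then {[]} else ∅
  | m, r+1, k => (Finset.range (m+1)).biUnion (fun a =>
      (if a = m then D m r k else if k = 0 then ∅ else D a r (k-1)).image (a :: ·))

lemma descents_single (m : ℕ) : descents [m] = 0 := by simp [descents]

lemma mem_D (m r k : ℕ) (t : List ℕ) :
    t ∈ D m r k ↔ t.length = r ∧ List.Chain' (· ≥ ·) (m :: t) ∧ descents (m :: t) = k := by
  induction r generalizing m k t with
  | zero =>
    rw [show D m 0 k = if k = 0 then {[]} else ∅ from rfl]
    constructor
    · intro h
      split_ifs at h with hk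
      · simp only [Finset.mem_singleton] at h
        subst h; subst hk
        exact ⟨rfl, List.isChain_singleton m, descents_single m⟩
      · exact absurd h (Finset.notMem_empty t)
    · rintro ⟨h1, h2, h3⟩
      rw [List.length_eq_zero_iff] at h1
      subst h1
      rw [descents_single] at h3
      subst h3
      simp
  | succ r ih =>
    rw [show D m (r+1) k = (Finset.range (m+1)).biUnion (fun a =>
      (if a = m then D m r k else if k = 0 then ∅ else D a r (k-1)).image (a :: ·)) from rfl]
    simp only [Finset.mem_biUnion, Finset.mem_range, Finset.mem_image]
    constructor
    · rintro ⟨a, ha, t', ht', rfl⟩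
      split_ifs at ht' with h1 h2
      · subst h1
        obtain ⟨hl, hc, hd⟩ := (ih _ _ _).mp ht'
        refine ⟨by simp [hl], List.isChain_cons_cons.mpr ⟨le_refl a, hc⟩, ?_⟩
        rw [descents_cons, hd]
        simp
      · exact absurd ht' (Finset.notMem_empty t')
      · obtain ⟨hl, hc, hd⟩ := (ih _ _ _).mp ht'
        refine ⟨by simp [hl], List.isChain_cons_cons.mpr ⟨by omega, hc⟩, ?_⟩
        rw [descents_cons, hd]
        have ham : a < m := by omega
        simp only [List.getD_cons_zero, List.length_cons]
        rw [if_pos ⟨by omega, ham⟩]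
        omega
    · rintro ⟨hlen, hchain, hdes⟩
      match t with
      | a :: t' =>
        unfold List.Chain' at hchain
        rw [List.isChain_cons_cons] at hchain
        obtain ⟨ham, hc⟩ := hchain
        refine ⟨a, by omega, t', ?_, rfl⟩
        rw [descents_cons] at hdes
        simp only [List.getD_cons_zero, List.length_cons] at hdes
        by_cases h1 : a = m
        · subst h1
          rw [if_pos rfl]
          rw [if_neg (by omega)] at hdes
          exact (ih _ _ _).mpr ⟨by simpa using hlen, hc, by omega⟩
        · have ham' : a < m := by omega
          rw [if_pos ⟨by omega, ham'⟩] at hdes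
          rw [if_neg h1, if_neg (by omega)]
          exact (ih _ _ _).mpr ⟨by simpa using hlen, hc, by omega⟩

lemma hockey (j m : ℕ) : ∑ a ∈ Finset.range m, a.choose j = m.choose (j+1) := by
  induction m with
  | zero => simp
  | succ m ih => rw [Finset.sum_range_succ, ih, Nat.choose_succ_succ]; exact Nat.add_comm _ _

lemma card_D (m r k : ℕ) : (D m r k).card = m.choose k * r.choose k := by
  induction r generalizing m k with
  | zero =>
    rw [show D m 0 k = if k = 0 then {[]} else ∅ from rfl]
    match k with
    | 0 => simp
    | k+1 => simp
  | succ r ih =>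
    rw [show D m (r+1) k = (Finset.range (m+1)).biUnion (fun a =>
      (if a = m then D m r k else if k = 0 then ∅ else D a r (k-1)).image (a :: ·)) from rfl]
    rw [Finset.card_biUnion]
    · have hinj : ∀ (a : ℕ) (s : Finset (List ℕ)), (s.image (a :: ·)).card = s.card := by
        intro a s
        apply Finset.card_image_of_injective
        intro x y h
        simpa using h
      simp only [hinj]
      rw [Finset.sum_range_succ, if_pos rfl, ih]
      have hrest : ∀ a ∈ Finset.range m,
          (if a = m then D m r k else if k = 0 then ∅ else D a r (k-1)).card
          = if k = 0 then 0 else a.choose (k-1) * r.choose (k-1) := by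
        intro a ha
        simp only [Finset.mem_range] at ha
        rw [if_neg (by omega)]
        split_ifs with hk
        · simp
        · exact ih _ _
      rw [Finset.sum_congr rfl hrest]
      match k with
      | 0 => simp
      | k+1 =>
        simp only [if_neg (Nat.succ_ne_zero k), Nat.add_sub_cancel]
        rw [← Finset.sum_mul, hockey]
        rw [Nat.choose_succ_succ r]
        ring
    · intro x _ y _ hxy
      rw [Function.onFun, Finset.disjoint_left]
      intro w hw hw'
      simp only [Finset.mem_image] at hw hw'
      obtain ⟨w1, _, h1⟩ := hw
      obtain ⟨w2, _, h2⟩ := hw'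
      have h3 := h1.trans h2.symm
      injection h3 with h4 _
      exact hxy h4
lemma vand (N j : ℕ) : ∀ l, ∑ m ∈ Finset.range (N+1), (m.choose j) * ((N-m).choose l)
    = (N+1).choose (j+l+1) := by
  induction N with
  | zero =>
    intro l
    simp only [Finset.range_one, Finset.sum_singleton, Nat.zero_sub]
    match j, l with
    | 0, 0 => simp
    | j+1, l =>
      rw [Nat.choose_eq_zero_of_lt (show 1 < j+1+l+1 by omega)]
      simp
    | 0, l+1 =>
      rw [Nat.choose_eq_zero_of_lt (show 1 < 0+(l+1)+1 by omega)]
      simp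
  | succ N ih =>
    intro l
    match l with
    | 0 =>
      have h1 : ∀ m ∈ Finset.range (N+2), (m.choose j) * ((N+1-m).choose 0) = m.choose j := by
        intro m _; simp
      rw [Finset.sum_congr rfl h1, hockey]
    | l+1 =>
      rw [Finset.sum_range_succ]
      have h2 : (N+1-(N+1)).choose (l+1) = 0 := by simp
      rw [h2, Nat.mul_zero, Nat.add_zero]
      have h3 : ∀ m ∈ Finset.range (N+1), (m.choose j) * ((N+1-m).choose (l+1))
          = (m.choose j) * ((N-m).choose l) + (m.choose j) * ((N-m).choose (l+1)) := by
        intro m hm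
        simp only [Finset.mem_range] at hm
        rw [show N+1-m = (N-m)+1 by omega, Nat.choose_succ_succ, Nat.mul_add]
      rw [Finset.sum_congr rfl h3, Finset.sum_add_distrib, ih l, ih (l+1)]
      rw [show j+(l+1)+1 = (j+l+1)+1 by ring, Nat.choose_succ_succ (N+1) (j+l+1)]
lemma ext_getD (l1 l2 : List ℕ) (h : l1.length = l2.length)
    (h2 : ∀ i, i < l1.length → l1.getD i 0 = l2.getD i 0) : l1 = l2 := by
  apply List.ext_getElem h
  intro i hi1 hi2
  have := h2 i hi1
  rwa [List.getD_eq_getElem _ _ hi1, List.getD_eq_getElem _ _ hi2] at this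

lemma getD_drop (w : List ℕ) (a j : ℕ) (h : a + j < w.length) :
    (w.drop a).getD j 0 = w.getD (a+j) 0 := by
  rw [List.getD_eq_getElem _ _ (by rw [List.length_drop]; omega),
    List.getD_eq_getElem _ _ h, List.getElem_drop]
lemma forward (n k m : ℕ) (hm : m < n) (t : List ℕ) (ht : t ∈ D m (n-1-m) k) :
    (List.range (m+1) ++ t) ∈ CW n (· ≥ ·) (· < ·) ∧ descents (List.range (m+1) ++ t) = k := by
  obtain ⟨hlen, hchain, hdes⟩ := (mem_D _ _ _ _).mp ht
  set w := List.range (m+1) ++ t with hw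
  have hwlen : w.length = n := by
    rw [hw, List.length_append, List.length_range, hlen]; omega
  have hkey : ∀ i, m ≤ i → w.getD i 0 = (m :: t).getD (i - m) 0 := by
    intro i hi
    have h2 := getD_prefix' m t (i - m)
    rw [show m + (i - m) = i by omega] at h2
    exact h2
  have hchain' := (chain'_ge_iff _).mp hchain
  have hmtlen : (m :: t).length = n - m := by rw [List.length_cons, hlen]; omega
  refine ⟨⟨hwlen, ⟨?_, ?_⟩, ?_⟩, ?_⟩
  · intro _
    rw [hw, getD_prefix, if_pos (Nat.zero_le m)]
  · intro i hi
    rw [hwlen] at hi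
    by_cases hc : i + 1 ≤ m
    · rw [hw, getD_prefix, getD_prefix, if_pos hc, if_pos (by omega)]
    · have him : m ≤ i := by omega
      rw [hkey i him, hkey (i+1) (by omega)]
      rw [show i + 1 - m = (i - m) + 1 by omega]
      have := hchain' (i - m) (by omega)
      omega
  · intro i hi
    rw [hwlen] at hi
    rintro ⟨hX, hY⟩
    by_cases hc : i + 1 ≤ m
    · rw [hw, getD_prefix, getD_prefix, if_pos hc, if_pos (by omega)] at hX
      omega
    · have him : m ≤ i + 1 := by omega
      rw [hkey (i+1) him, hkey (i+2) (by omega),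
        show i + 2 - m = (i + 1 - m) + 1 by omega] at hY
      have := hchain' (i + 1 - m) (by omega)
      omega
  · rw [hw, descents_append, hdes]

lemma backward (n k : ℕ) (hn : 1 ≤ n) (w : List ℕ) (hw : w ∈ CW n (· ≥ ·) (· < ·))
    (hdes : descents w = k) :
    ∃ m < n, ∃ t ∈ D m (n-1-m) k, w = List.range (m+1) ++ t := by
  obtain ⟨hlen, hcat, havoid⟩ := hw
  have hle : ∀ i, w.getD i 0 ≤ i := by
    intro i
    induction i with
    | zero =>
      rcases Nat.lt_or_ge 0 w.length with h|h
      · rw [hcat.1 h]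
      · rw [List.getD_eq_default _ _ (by omega)]
    | succ i ih =>
      by_cases h : i + 1 < w.length
      · have := hcat.2 i h
        omega
      · rw [List.getD_eq_default _ _ (by omega)]
        omega
  set m := Nat.findGreatest (fun i => w.getD i 0 = i) (n-1) with hmdef
  have hm0 : w.getD 0 0 = 0 := hcat.1 (by omega)
  have hmspec : w.getD m 0 = m := by
    have h := Nat.findGreatest_spec (P := fun i => w.getD i 0 = i) (Nat.zero_le (n-1)) hm0
    rwa [← hmdef] at h
  have hmle : m ≤ n - 1 := Nat.findGreatest_le _
  have hstep : ∀ d j, j + d < n → w.getD (j+d) 0 ≤ w.getD j 0 + d := by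
    intro d
    induction d with
    | zero => intro j _; simp
    | succ d ih =>
      intro j hj
      have h1 := hcat.2 (j+d) (by omega)
      have h2 := ih j (by omega)
      rw [show j + (d+1) = j + d + 1 by ring]
      omega
  have hprefix : ∀ j ≤ m, w.getD j 0 = j := by
    intro j hj
    have h1 := hle j
    have h2 := hstep (m - j) j (by omega)
    rw [show j + (m - j) = m by omega, hmspec] at h2
    omega
  have hdec : ∀ d, m + d + 1 < n → w.getD (m+d+1) 0 ≤ w.getD (m+d) 0 := by
    intro d
    induction d with
    | zero =>
      intro h
      simp only [Nat.add_zero] at h ⊢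
      have h1 : ¬ (w.getD (m+1) 0 = m + 1) := by
        apply Nat.findGreatest_is_greatest (P := fun i => w.getD i 0 = i) (n := n-1) _ (by omega)
        rw [← hmdef]; omega
      have h2 := hcat.2 m (by omega)
      omega
    | succ d ih =>
      intro h
      have h1 := ih (by omega)
      have h2 := havoid (m+d) (by omega)
      rw [show m + d + 2 = m + d + 1 + 1 by ring] at h2
      push_neg at h2
      have h3 := h2 (by exact h1)
      rw [show m + (d+1) + 1 = m + d + 1 + 1 by ring, show m + (d+1) = m + d + 1 by ring]
      omega
  have hsplit : w = List.range (m+1) ++ w.drop (m+1) := by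
    refine (ext_getD _ _ ?_ ?_).symm
    · rw [List.length_append, List.length_range, List.length_drop, hlen]; omega
    · intro i hi
      rw [List.length_append, List.length_range, List.length_drop, hlen] at hi
      rw [getD_prefix]
      by_cases h3 : i ≤ m
      · rw [if_pos h3, hprefix i h3]
      · rw [if_neg h3, getD_drop _ _ _ (by rw [hlen]; omega)]
        congr 1
        omega
  have hmt : ∀ j, m + j < n → (m :: w.drop (m+1)).getD j 0 = w.getD (m+j) 0 := by
    intro j hj
    cases j with
    | zero => rw [List.getD_cons_zero, Nat.add_zero, hmspec]
    | succ j' =>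
      rw [List.getD_cons_succ, getD_drop _ _ _ (by rw [hlen]; omega)]
      congr 1
      omega
  refine ⟨m, by omega, w.drop (m+1), ?_, hsplit⟩
  rw [mem_D]
  refine ⟨by rw [List.length_drop, hlen]; omega, ?_, ?_⟩
  · rw [chain'_ge_iff]
    intro i hi
    rw [List.length_cons, List.length_drop, hlen] at hi
    rw [hmt (i+1) (by omega), hmt i (by omega), show m + (i+1) = m + i + 1 by ring]
    exact hdec i (by omega)
  · rw [← descents_append, ← hsplit]
    exact hdes

theorem stmt_16 (n k : ℕ) (hn : 1 ≤ n) :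
    {w ∈ CW n (· ≥ ·) (· < ·) | descents w = k}.ncard = n.choose (2 * k + 1) := by
  classical
  set F : Finset (List ℕ) := (Finset.range n).biUnion
    (fun m => (D m (n-1-m) k).image (fun t => List.range (m+1) ++ t)) with hF
  have hset : {w ∈ CW n (· ≥ ·) (· < ·) | descents w = k} = ↑F := by
    ext w
    simp only [Set.mem_setOf_eq, Finset.mem_coe, hF, Finset.mem_biUnion, Finset.mem_range,
      Finset.mem_image]
    constructor
    · rintro ⟨hw, hd⟩
      obtain ⟨m, hm, t, ht, rfl⟩ := backward n k hn w hw hd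
      exact ⟨m, hm, t, ht, rfl⟩
    · rintro ⟨m, hm, t, ht, rfl⟩
      exact forward n k m hm t ht
  rw [hset, Set.ncard_coe_finset, hF]
  have haux : ∀ m m', m < m' → m' < n → ∀ w : List ℕ,
      w ∈ (D m (n-1-m) k).image (fun t => List.range (m+1) ++ t) →
      w ∈ (D m' (n-1-m') k).image (fun t => List.range (m'+1) ++ t) → False := by
    intro m m' hmm' hm'n w hw hw'
    obtain ⟨t, ht, rfl⟩ := Finset.mem_image.mp hw
    obtain ⟨t', _, heq⟩ := Finset.mem_image.mp hw'
    obtain ⟨hlen, hchain, -⟩ := (mem_D _ _ _ _).mp ht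
    have htne : 1 ≤ t.length := by rw [hlen]; omega
    have h1 : (List.range (m+1) ++ t).getD (m+1) 0 = t.getD 0 0 := by
      rw [getD_prefix, if_neg (by omega)]
      simp
    have h2 : t.getD 0 0 ≤ m := by
      have := (chain'_ge_iff _).mp hchain 0 (by simp; omega)
      simpa using this
    have h3 : (List.range (m'+1) ++ t').getD (m+1) 0 = m+1 := by
      rw [getD_prefix, if_pos (by omega)]
    rw [heq, h1] at h3
    omega
  rw [Finset.card_biUnion (by
    intro x hx y hy hxy
    rw [Function.onFun, Finset.disjoint_left]
    intro w hw hw'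
    simp only [Finset.mem_coe, Finset.mem_range] at hx hy
    rcases Nat.lt_or_ge x y with h | h
    · exact haux x y h hy w hw hw'
    · exact haux y x (by omega) hx w hw' hw)]
  have hterm : ∀ m ∈ Finset.range n,
      ((D m (n-1-m) k).image (fun t => List.range (m+1) ++ t)).card
      = m.choose k * (n-1-m).choose k := by
    intro m _
    rw [Finset.card_image_of_injective _ (fun a b h => List.append_cancel_left h), card_D]
  rw [Finset.sum_congr rfl hterm]
  have hrange : Finset.range n = Finset.range ((n-1)+1) := by congr 1; omega
  rw [hrange]
  have hsum : ∀ m ∈ Finset.range ((n-1)+1),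
      m.choose k * (n-1-m).choose k = m.choose k * ((n-1)-m).choose k := by
    intro m _; rfl
  rw [Finset.sum_congr rfl hsum, vand (n-1) k k, show (n-1)+1 = n by omega,
    show k+k+1 = 2*k+1 by ring]
end

section
/- The total number of descents over all Catalan words of length n avoiding the pattern pair (≥, <) equals (n−2)·2^{n−3} for n ≥ 3. Equivalently, the generating function for these totals is x³/(1 − 2x)². -/
namespace Stmt17

/-! ### Structural predicates -/

/-- `cat p w`: `w` is a valid Catalan continuation after a letter `p`. -/
def cat : ℕ → List ℕ → Prop
  | _, [] => True
  | p, a :: r => a ≤ p + 1 ∧ cat a r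

/-- `av a b w`: the word `a :: b :: w` avoids `(≥, <)`. -/
def av : ℕ → ℕ → List ℕ → Prop
  | _, _, [] => True
  | a, b, c :: r => ¬(b ≤ a ∧ b < c) ∧ av b c r

/-- Structural descent counter. -/
def drops : List ℕ → ℕ
  | a :: b :: r => (if b < a then 1 else 0) + drops (b :: r)
  | _ => 0

/-- `decr p t`: `t` is weakly decreasing with head at most `p`. -/
def decr : ℕ → List ℕ → Prop
  | _, [] => True
  | p, a :: r => a ≤ p ∧ decr a r

def tailOf : List Bool → List ℕ
  | [] => []
  | true :: r => tailOf r
  | false :: r => r.count true :: tailOf r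

def wordOf (b : List Bool) : List ℕ := List.range (b.count true + 1) ++ tailOf b

def enc : ℕ → List ℕ → List Bool
  | p, [] => List.replicate p true
  | p, a :: r => List.replicate (p - a) true ++ false :: enc a r

def count10 : List Bool → ℕ
  | x :: y :: r => (if x = true ∧ y = false then 1 else 0) + count10 (y :: r)
  | _ => 0

def allBools : ℕ → Finset (List Bool)
  | 0 => {[]}
  | L + 1 => (allBools L).image (true :: ·) ∪ (allBools L).image (false :: ·)

/-! ### Bridging lemmas -/

lemma cat_iff : ∀ (w : List ℕ) (p : ℕ), cat p w ↔
    ((0 < w.length → w.getD 0 0 ≤ p + 1) ∧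
     ∀ i, i + 1 < w.length → w.getD (i + 1) 0 ≤ w.getD i 0 + 1)
  | [], p => by simp [cat]
  | a :: r, p => by
    rw [cat, cat_iff r a]
    constructor
    · rintro ⟨h1, h2, h3⟩
      refine ⟨fun _ => by simpa using h1, ?_⟩
      intro i hi
      cases i with
      | zero =>
        simpa using h2 (by simpa using hi)
      | succ j =>
        simpa using h3 j (by simpa using hi)
    · rintro ⟨h1, h2⟩
      refine ⟨by simpa using h1 (by simp), fun hr => ?_, fun j hj => ?_⟩
      · simpa using h2 0 (by simpa using hr)
      · simpa using h2 (j + 1) (by simpa using hj)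

lemma isCat_cons (a : ℕ) (r : List ℕ) :
    IsCatalanWord (a :: r) ↔ a = 0 ∧ cat a r := by
  rw [IsCatalanWord, cat_iff]
  constructor
  · rintro ⟨h1, h2⟩
    refine ⟨by simpa using h1 (by simp), fun hr => ?_, fun j hj => ?_⟩
    · simpa using h2 0 (by simpa using hr)
    · simpa using h2 (j + 1) (by simpa using hj)
  · rintro ⟨h1, h2, h3⟩
    refine ⟨fun _ => by simpa using h1, ?_⟩
    intro i hi
    cases i with
    | zero => simpa using h2 (by simpa using hi)
    | succ j => simpa using h3 j (by simpa using hi)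

lemma avoids_short (X Y : ℕ → ℕ → Prop) (w : List ℕ) (h : w.length ≤ 2) :
    AvoidsPair X Y w := fun i hi => absurd hi (by omega)

lemma avoids_iff : ∀ (w : List ℕ) (a b : ℕ),
    AvoidsPair (· ≥ ·) (· < ·) (a :: b :: w) ↔ av a b w
  | [], a, b => by
    simp only [av, iff_true]
    exact avoids_short _ _ _ (by simp)
  | c :: r, a, b => by
    rw [av, ← avoids_iff r b c]
    constructor
    · intro h
      refine ⟨by simpa [ge_iff_le] using h 0 (by simp), fun i hi => ?_⟩
      have := h (i + 1) (by simpa using hi)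
      simpa using this
    · rintro ⟨h1, h2⟩ i hi
      cases i with
      | zero => simpa [ge_iff_le] using h1
      | succ j =>
        have := h2 j (by simpa using hi)
        simpa using this

lemma descents_cons2 (a b : ℕ) (r : List ℕ) :
    descents (a :: b :: r) = (if b < a then 1 else 0) + descents (b :: r) := by
  unfold descents
  rw [Finset.card_filter, Finset.card_filter]
  simp only [List.length_cons, Nat.add_sub_cancel]
  rw [Finset.sum_range_succ']
  simp only [List.getD_cons_succ, List.getD_cons_zero]
  omega

lemma descents_eq_drops : ∀ w : List ℕ, descents w = drops w
  | [] => by simp [descents, drops]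
  | [a] => by simp [descents, drops]
  | a :: b :: r => by
    rw [descents_cons2, drops, descents_eq_drops (b :: r)]

/-! ### decr facts -/

lemma decr_mono {p q : ℕ} {t : List ℕ} (h : p ≤ q) : decr p t → decr q t := by
  cases t with
  | nil => intro; trivial
  | cons c r => rintro ⟨h1, h2⟩; exact ⟨h1.trans h, h2⟩

lemma cat_of_decr : ∀ {t : List ℕ} {p : ℕ}, decr p t → cat p t
  | [], _, _ => trivial
  | c :: r, p, ⟨h1, h2⟩ => ⟨by omega, cat_of_decr h2⟩

lemma av_of_decr : ∀ {t : List ℕ} {b : ℕ} (a : ℕ), decr b t → av a b t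
  | [], _, _, _ => trivial
  | c :: r, b, a, ⟨h1, h2⟩ => ⟨fun h => by omega, av_of_decr b h2⟩

lemma cat_up : ∀ (k p : ℕ) (t : List ℕ), decr (p + k) t →
    cat p (List.range' (p + 1) k ++ t)
  | 0, p, t, h => by simpa using cat_of_decr h
  | k + 1, p, t, h => by
    rw [List.range'_succ]
    exact ⟨le_refl _, cat_up k (p + 1) t (by rw [show p + 1 + k = p + (k + 1) by omega]; exact h)⟩

lemma av_up : ∀ (k a p : ℕ) (t : List ℕ), a < p → decr (p + k) t →
    av a p (List.range' (p + 1) k ++ t)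
  | 0, a, p, t, ha, h => by simpa using av_of_decr a h
  | k + 1, a, p, t, ha, h => by
    rw [List.range'_succ]
    refine ⟨fun hc => by omega, ?_⟩
    exact av_up k p (p + 1) t (by omega) (by rw [show p + 1 + k = p + (k + 1) by omega]; exact h)

/-! ### Structure theorem -/

lemma down : ∀ (t : List ℕ) (a b : ℕ), b ≤ a → cat b t → av a b t → decr b t
  | [], _, _, _, _, _ => trivial
  | c :: r, a, b, hba, ⟨hc, hcat⟩, ⟨hav1, hav2⟩ => by
    have hcb : c ≤ b := by
      by_contra h
      exact hav1 ⟨hba, by omega⟩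
    exact ⟨hcb, down r b c hcb hcat hav2⟩

lemma up : ∀ (t : List ℕ) (a b : ℕ), a < b → cat b t → av a b t →
    ∃ k u, t = List.range' (b + 1) k ++ u ∧ decr (b + k) u
  | [], a, b, _, _, _ => ⟨0, [], by simp, trivial⟩
  | c :: r, a, b, hab, ⟨hc, hcat⟩, ⟨hav1, hav2⟩ => by
    rcases Nat.lt_or_ge c (b + 1) with hcb | hcb
    · -- c ≤ b : switch to decreasing
      have hdec : decr c r := down r b c (by omega) hcat hav2
      exact ⟨0, c :: r, by simp, by omega, hdec⟩
    · -- c = b + 1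
      have hceq : c = b + 1 := by omega
      subst hceq
      obtain ⟨k, u, hu, hd⟩ := up r b (b + 1) (by omega) hcat hav2
      refine ⟨k + 1, u, ?_, ?_⟩
      · rw [List.range'_succ, hu, List.cons_append]
      · exact decr_mono (by omega) hd

lemma structure_thm {w : List ℕ} (hc : IsCatalanWord w)
    (ha : AvoidsPair (· ≥ ·) (· < ·) w) (hne : w ≠ []) :
    ∃ k t, w = List.range (k + 1) ++ t ∧ decr k t := by
  obtain ⟨a, r, rfl⟩ : ∃ a r, w = a :: r := by
    cases w with
    | nil => exact absurd rfl hne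
    | cons a r => exact ⟨a, r, rfl⟩
  obtain ⟨ha0, hcat⟩ := (isCat_cons a r).1 hc
  subst ha0
  cases r with
  | nil => exact ⟨0, [], by simp [List.range_succ], trivial⟩
  | cons c s =>
    obtain ⟨hc1, hcat2⟩ := hcat
    have hav : av 0 c s := (avoids_iff s 0 c).1 ha
    rcases Nat.lt_or_ge c 1 with hc0 | hc0
    · -- c = 0
      have : c = 0 := by omega
      subst this
      have hdec : decr 0 s := down s 0 0 (le_refl _) hcat2 hav
      exact ⟨0, 0 :: s, by simp [List.range_succ], le_refl _, hdec⟩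
    · have : c = 1 := by omega
      subst this
      obtain ⟨k, u, hu, hd⟩ := up s 0 1 (by omega) hcat2 hav
      refine ⟨k + 1, u, ?_, decr_mono (by omega) hd⟩
      rw [hu]
      have : List.range (k + 1 + 1) = 0 :: 1 :: List.range' 2 k := by
        rw [List.range_eq_range', List.range'_succ, List.range'_succ]
      rw [this]
      simp

/-! ### Encoding facts -/

lemma decr_tailOf : ∀ b : List Bool, decr (b.count true) (tailOf b)
  | [] => trivial
  | true :: r => by
    rw [tailOf]
    refine decr_mono ?_ (decr_tailOf r)
    simp [List.count_cons]
  | false :: r => by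
    rw [tailOf]
    exact ⟨by simp [List.count_cons], decr_tailOf r⟩

lemma count_tailOf_len : ∀ b : List Bool, b.count true + (tailOf b).length = b.length
  | [] => rfl
  | true :: r => by
    rw [tailOf]
    have := count_tailOf_len r
    simp [List.count_cons]
    omega
  | false :: r => by
    rw [tailOf]
    have := count_tailOf_len r
    simp [List.count_cons]
    omega

lemma count_enc : ∀ (t : List ℕ) (p : ℕ), decr p t → (enc p t).count true = p
  | [], p, _ => by simp [enc]
  | a :: r, p, ⟨h1, h2⟩ => by
    rw [enc]
    simp [List.count_append, List.count_cons, List.count_replicate, count_enc r a h2]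
    omega

lemma tailOf_replicate_append : ∀ (a : ℕ) (s : List Bool),
    tailOf (List.replicate a true ++ s) = tailOf s
  | 0, s => by simp
  | a + 1, s => by
    rw [List.replicate_succ, List.cons_append, tailOf]
    exact tailOf_replicate_append a s

lemma tailOf_enc : ∀ (t : List ℕ) (p : ℕ), decr p t → tailOf (enc p t) = t
  | [], p, _ => by
    rw [enc, show List.replicate p true = List.replicate p true ++ [] by simp,
      tailOf_replicate_append]
    rfl
  | a :: r, p, ⟨h1, h2⟩ => by
    rw [enc, tailOf_replicate_append, tailOf, count_enc r a h2, tailOf_enc r a h2]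

lemma len_enc : ∀ (t : List ℕ) (p : ℕ), decr p t → (enc p t).length = p + t.length
  | [], p, _ => by simp [enc]
  | a :: r, p, ⟨h1, h2⟩ => by
    rw [enc]
    simp [len_enc r a h2]
    omega

lemma enc_succ : ∀ (t : List ℕ) (p : ℕ), decr p t → enc (p + 1) t = true :: enc p t
  | [], p, _ => by simp [enc, List.replicate_succ]
  | a :: r, p, ⟨h1, h2⟩ => by
    rw [enc, enc, show p + 1 - a = (p - a) + 1 by omega, List.replicate_succ]
    simp

lemma enc_left_inv : ∀ b : List Bool, enc (b.count true) (tailOf b) = b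
  | [] => by simp [tailOf, enc]
  | true :: r => by
    rw [tailOf]
    have : (true :: r).count true = r.count true + 1 := by simp [List.count_cons]
    rw [this, enc_succ _ _ (decr_tailOf r), enc_left_inv r]
  | false :: r => by
    rw [tailOf]
    have : (false :: r).count true = r.count true := by simp [List.count_cons]
    rw [this, enc, Nat.sub_self]
    simp [enc_left_inv r]

/-! ### wordOf is in CW -/

lemma range_succ_cons (k : ℕ) : List.range (k + 1) = 0 :: List.range' 1 k := by
  rw [List.range_eq_range', List.range'_succ]

lemma wordOf_cons (b : List Bool) :
    wordOf b = 0 :: (List.range' 1 (b.count true) ++ tailOf b) := by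
  rw [wordOf, range_succ_cons]
  rfl

lemma isCat_wordOf (b : List Bool) : IsCatalanWord (wordOf b) := by
  rw [wordOf_cons, isCat_cons]
  exact ⟨rfl, cat_up _ 0 _ (by simpa using decr_tailOf b)⟩

lemma avoids_ranget : ∀ (k : ℕ) (t : List ℕ), decr k t →
    AvoidsPair (· ≥ ·) (· < ·) (List.range (k + 1) ++ t)
  | 0, t, h => by
    cases t with
    | nil => exact avoids_short _ _ _ (by simp)
    | cons c s =>
      obtain ⟨h1, h2⟩ := h
      have hc : c = 0 := by omega
      subst hc
      have : List.range 1 ++ 0 :: s = 0 :: 0 :: s := by simp [List.range_succ]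
      rw [this, avoids_iff]
      exact av_of_decr 0 h2
  | k + 1, t, h => by
    have : List.range (k + 1 + 1) ++ t = 0 :: 1 :: (List.range' 2 k ++ t) := by
      rw [List.range_eq_range', List.range'_succ, List.range'_succ]
      simp
    rw [this, avoids_iff]
    exact av_up k 0 1 t (by omega) (by simpa [Nat.add_comm] using h)

lemma avoids_wordOf (b : List Bool) : AvoidsPair (· ≥ ·) (· < ·) (wordOf b) :=
  avoids_ranget _ _ (decr_tailOf b)

lemma length_wordOf (b : List Bool) : (wordOf b).length = b.length + 1 := by
  rw [wordOf]
  simp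
  have := count_tailOf_len b
  omega

/-! ### drops of wordOf -/

lemma drops_up : ∀ (k a : ℕ) (t : List ℕ),
    drops (a :: (List.range' (a + 1) k ++ t)) = drops ((a + k) :: t)
  | 0, a, t => by simp
  | k + 1, a, t => by
    rw [List.range'_succ]
    have : drops (a :: (a + 1) :: (List.range' (a + 1 + 1) k ++ t)) =
        (if a + 1 < a then 1 else 0) + drops ((a + 1) :: (List.range' (a + 1 + 1) k ++ t)) := rfl
    rw [List.cons_append, this, if_neg (by omega), drops_up k (a + 1) t]
    have : a + 1 + k = a + (k + 1) := by omega
    rw [this]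
    simp

lemma count10_replicate_true : ∀ a : ℕ, count10 (List.replicate a true) = 0
  | 0 => rfl
  | 1 => rfl
  | a + 2 => by
    rw [List.replicate_succ, List.replicate_succ, show
      count10 (true :: true :: List.replicate a true) =
        (if (true = true ∧ true = false) then 1 else 0) +
          count10 (true :: List.replicate a true) from rfl]
    rw [← List.replicate_succ]
    simp [count10_replicate_true (a + 1)]

lemma count10_false_cons : ∀ s : List Bool, count10 (false :: s) = count10 s
  | [] => rfl
  | y :: r => by
    rw [show count10 (false :: y :: r) =
      (if (false = true ∧ y = false) then 1 else 0) + count10 (y :: r) from rfl]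
    simp

lemma count10_rep_block : ∀ (a : ℕ) (s : List Bool),
    count10 (List.replicate a true ++ false :: s) =
      (if 0 < a then 1 else 0) + count10 (false :: s)
  | 0, s => by simp
  | 1, s => by
    simp only [List.replicate_succ, List.replicate_zero, List.nil_append, List.cons_append]
    rw [show count10 (true :: false :: s) =
      (if (true = true ∧ false = false) then 1 else 0) + count10 (false :: s) from rfl]
    simp
  | a + 2, s => by
    rw [List.replicate_succ, List.cons_append]
    rw [show count10 (true :: (List.replicate (a + 1) true ++ false :: s)) =
      (if (true = true ∧ (List.replicate (a + 1) true ++ false :: s).headD true = false)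
        then 1 else 0) + count10 (List.replicate (a + 1) true ++ false :: s) from ?_]
    · rw [count10_rep_block (a + 1) s]
      simp [List.replicate_succ]
    · rw [List.replicate_succ, List.cons_append]
      rfl

lemma rep_true_cons (a : ℕ) (s : List Bool) :
    List.replicate a true ++ true :: s = List.replicate (a + 1) true ++ s := by
  rw [List.replicate_succ']
  simp

lemma drops_key : ∀ (b : List Bool) (m : ℕ), b.count true ≤ m →
    drops (m :: tailOf b) = count10 (List.replicate (m - b.count true) true ++ b)
  | [], m, _ => by
    simp [tailOf, drops, count10_replicate_true]
  | true :: r, m, h => by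
    have hcr : (true :: r).count true = r.count true + 1 := by simp [List.count_cons]
    rw [hcr] at h
    rw [tailOf, drops_key r m (by omega), hcr, rep_true_cons,
      show m - (r.count true + 1) + 1 = m - r.count true by omega]
  | false :: r, m, h => by
    have hcr : (false :: r).count true = r.count true := by simp [List.count_cons]
    rw [hcr] at h
    rw [tailOf, hcr]
    rw [show drops (m :: r.count true :: tailOf r) =
      (if r.count true < m then 1 else 0) + drops (r.count true :: tailOf r) from rfl]
    rw [drops_key r (r.count true) (le_refl _), Nat.sub_self, List.replicate_zero,
      List.nil_append, count10_rep_block, count10_false_cons]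
    by_cases hlt : r.count true < m
    · rw [if_pos hlt, if_pos (by omega)]
    · rw [if_neg hlt, if_neg (by omega)]

lemma descents_wordOf (b : List Bool) : descents (wordOf b) = count10 b := by
  rw [descents_eq_drops, wordOf_cons, show (0 : ℕ) = 0 + 0 from rfl]
  have h1 : List.range' (0 + 0 + 1) (b.count true) = List.range' 1 (b.count true) := by norm_num
  rw [← h1, drops_up]
  have := drops_key b (b.count true) (le_refl _)
  rw [Nat.sub_self] at this
  simpa using this

/-! ### Injectivity -/

lemma decr_head {p c : ℕ} {r : List ℕ} (h : decr p (c :: r)) : c ≤ p := h.1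

lemma pair_ne {c c' : ℕ} {t t' : List ℕ} (hlt : c < c') (hd : decr c t) :
    List.range (c + 1) ++ t ≠ List.range (c' + 1) ++ t' := by
  intro heq
  have hlen : c + 1 + t.length = c' + 1 + t'.length := by
    have := congrArg List.length heq
    simpa using this
  have htne : t ≠ [] := by
    intro h
    subst h
    simp at hlen
    omega
  obtain ⟨t0, tr, rfl⟩ : ∃ t0 tr, t = t0 :: tr := by
    cases t with
    | nil => exact absurd rfl htne
    | cons t0 tr => exact ⟨t0, tr, rfl⟩
  have ht0 : t0 ≤ c := hd.1
  have hi : c + 1 < (List.range (c + 1) ++ t0 :: tr).length := by simp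
  have hL : (List.range (c + 1) ++ t0 :: tr)[c + 1] = t0 := by
    rw [List.getElem_append_right (by simp)]
    simp
  have hi2 : c + 1 < (List.range (c' + 1) ++ t').length := by simp; omega
  have hR : (List.range (c' + 1) ++ t')[c + 1] = c + 1 := by
    rw [List.getElem_append_left (by simp; omega)]
    exact List.getElem_range _
  have hq : (List.range (c + 1) ++ t0 :: tr)[c + 1]? = (List.range (c' + 1) ++ t')[c + 1]? := by
    rw [heq]
  rw [List.getElem?_eq_getElem hi, List.getElem?_eq_getElem hi2, hL, hR] at hq
  simp at hq
  omega

lemma pair_inj {c c' : ℕ} {t t' : List ℕ} (hd : decr c t) (hd' : decr c' t')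
    (heq : List.range (c + 1) ++ t = List.range (c' + 1) ++ t') : c = c' ∧ t = t' := by
  have hcc : c = c' := by
    rcases lt_trichotomy c c' with h | h | h
    · exact absurd heq (pair_ne h hd)
    · exact h
    · exact absurd heq.symm (pair_ne h hd')
  subst hcc
  exact ⟨rfl, List.append_cancel_left heq⟩

lemma wordOf_injective : Function.Injective wordOf := by
  intro b b' heq
  rw [wordOf, wordOf] at heq
  obtain ⟨hc, ht⟩ := pair_inj (decr_tailOf b) (decr_tailOf b') heq
  have := enc_left_inv b
  rw [hc, ht, enc_left_inv b'] at this
  exact this.symm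

/-! ### allBools -/

lemma mem_allBools : ∀ (L : ℕ) (b : List Bool), b ∈ allBools L ↔ b.length = L
  | 0, b => by
    rw [allBools]
    simp [List.length_eq_zero_iff]
  | L + 1, b => by
    rw [allBools]
    simp only [Finset.mem_union, Finset.mem_image]
    constructor
    · rintro (⟨c, hc, rfl⟩ | ⟨c, hc, rfl⟩) <;>
        simp [(mem_allBools L c).1 hc]
    · intro hb
      cases b with
      | nil => simp at hb
      | cons x c =>
        have hcL : c ∈ allBools L := (mem_allBools L c).2 (by simpa using hb)
        cases x
        · exact Or.inr ⟨c, hcL, rfl⟩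
        · exact Or.inl ⟨c, hcL, rfl⟩

lemma sum_allBools_succ (f : List Bool → ℕ) (L : ℕ) :
    ∑ b ∈ allBools (L + 1), f b = ∑ b ∈ allBools L, (f (true :: b) + f (false :: b)) := by
  rw [allBools]
  rw [Finset.sum_union]
  · rw [Finset.sum_image (by intro x _ y _ h; simpa using h),
      Finset.sum_image (by intro x _ y _ h; simpa using h), ← Finset.sum_add_distrib]
  · rw [Finset.disjoint_left]
    rintro a ha hb
    simp only [Finset.mem_image] at ha hb
    obtain ⟨c, _, rfl⟩ := ha
    obtain ⟨c', _, h⟩ := hb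
    simp at h

lemma card_allBools : ∀ L : ℕ, (allBools L).card = 2 ^ L
  | 0 => by simp [allBools]
  | L + 1 => by
    rw [Finset.card_eq_sum_ones, sum_allBools_succ, Finset.sum_const,
      card_allBools L, smul_eq_mul, pow_succ]

lemma count10_true_cons (b : List Bool) :
    count10 (true :: b) = count10 b + (if b.headD true = false then 1 else 0) := by
  cases b with
  | nil => simp [count10]
  | cons y c =>
    rw [show count10 (true :: y :: c) =
      (if (true = true ∧ y = false) then 1 else 0) + count10 (y :: c) from rfl]
    cases y <;> simp [Nat.add_comm]

lemma head_sum (M : ℕ) :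
    ∑ b ∈ allBools (M + 1), (if b.headD true = false then 1 else 0) = 2 ^ M := by
  rw [sum_allBools_succ]
  simp [card_allBools]

lemma sum_count10 : ∀ L : ℕ, ∑ b ∈ allBools L, count10 b = (L - 1) * 2 ^ (L - 2)
  | 0 => by simp [allBools, count10]
  | 1 => by
    rw [sum_allBools_succ]
    simp [allBools, count10]
  | M + 2 => by
    rw [sum_allBools_succ]
    have hsum : ∀ b : List Bool, count10 (true :: b) + count10 (false :: b) =
        2 * count10 b + (if b.headD true = false then 1 else 0) := by
      intro b
      rw [count10_true_cons, count10_false_cons]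
      ring
    rw [Finset.sum_congr rfl (fun b _ => hsum b), Finset.sum_add_distrib,
      ← Finset.mul_sum, sum_count10 (M + 1), head_sum]
    cases M with
    | zero => norm_num
    | succ M' =>
      have e1 : M' + 1 + 1 - 1 = M' + 1 := by omega
      have e2 : M' + 1 + 1 - 2 = M' := by omega
      have e3 : M' + 1 + 2 - 1 = M' + 2 := by omega
      have e4 : M' + 1 + 2 - 2 = M' + 1 := by omega
      rw [e1, e2, e3, e4, pow_succ]
      ring

/-! ### The set CW as a finset -/

lemma CW_eq (n : ℕ) (hn : 1 ≤ n) :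
    CW n (· ≥ ·) (· < ·) = ↑((allBools (n - 1)).image wordOf) := by
  ext w
  simp only [Finset.coe_image, Set.mem_image, Finset.mem_coe]
  constructor
  · rintro ⟨hlen, hcat, hav⟩
    have hne : w ≠ [] := by
      intro h
      rw [h] at hlen
      simp at hlen
      omega
    obtain ⟨k, t, rfl, hd⟩ := structure_thm hcat hav hne
    refine ⟨enc k t, ?_, ?_⟩
    · rw [mem_allBools, len_enc t k hd]
      have : (List.range (k + 1) ++ t).length = k + 1 + t.length := by simp
      omega
    · rw [wordOf, count_enc t k hd, tailOf_enc t k hd]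
  · rintro ⟨b, hb, rfl⟩
    rw [mem_allBools] at hb
    refine ⟨?_, isCat_wordOf b, avoids_wordOf b⟩
    rw [length_wordOf, hb]
    omega

theorem final (n : ℕ) (hn : 3 ≤ n) :
    ∑ᶠ w ∈ CW n (· ≥ ·) (· < ·), descents w = (n - 2) * 2 ^ (n - 3) := by
  rw [CW_eq n (by omega), finsum_mem_coe_finset,
    Finset.sum_image (fun x _ y _ h => wordOf_injective h)]
  rw [Finset.sum_congr rfl (fun b _ => descents_wordOf b), sum_count10]
  have h1 : n - 1 - 1 = n - 2 := by omega
  have h2 : n - 1 - 2 = n - 3 := by omega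
  rw [h1, h2]

end Stmt17

theorem stmt_17 (n : ℕ) (hn : 3 ≤ n) :
    ∑ᶠ w ∈ CW n (· ≥ ·) (· < ·), descents w = (n - 2) * 2 ^ (n - 3) :=
  Stmt17.final n hn
end

section
/- The total number of descents over all Catalan words of length n avoiding the pattern pair (≥, ≠) equals binom(n−1, 2) for n ≥ 1. Equivalently, the generating function for these totals is x³/(1 − x)³. -/
/-- The word 0,1,...,k-1,c,c,...,c of length n. -/
def wrd (n k c : ℕ) : List ℕ := List.range k ++ List.replicate (n - k) c

lemma wrd_length {n k c : ℕ} (h : k ≤ n) : (wrd n k c).length = n := by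
  simp [wrd]; omega

lemma wrd_getD {n k c : ℕ} (h : k ≤ n) (i : ℕ) :
    (wrd n k c).getD i 0 = if i < k then i else if i < n then c else 0 := by
  rw [wrd, List.getD_eq_getElem?_getD, List.getElem?_append]
  simp only [List.length_range]
  split
  · rw [List.getElem?_range (by omega)]; rfl
  · rw [List.getElem?_replicate]
    split
    · rw [if_pos (by omega)]; rfl
    · rw [if_neg (by omega)]; rfl

lemma wrd_mem_CW {n k c : ℕ} (hk2 : 2 ≤ k) (hkn : k < n) (hc : c + 2 ≤ k) :
    wrd n k c ∈ CW n (· ≥ ·) (· ≠ ·) := by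
  have hkn' : k ≤ n := hkn.le
  refine ⟨wrd_length hkn', ⟨?_, ?_⟩, ?_⟩
  · intro _; rw [wrd_getD hkn']; simp; omega
  · intro i hi
    rw [wrd_length hkn'] at hi
    rw [wrd_getD hkn', wrd_getD hkn']
    split <;> split <;> try omega
    all_goals split <;> omega
  · intro i hi
    rw [wrd_length hkn'] at hi
    rw [wrd_getD hkn', wrd_getD hkn', wrd_getD hkn']
    rintro ⟨h1, h2⟩
    by_cases hik : i + 1 < k
    · rw [if_pos (by omega), if_pos hik] at h1; omega
    · rw [if_neg (by omega), if_pos (by omega)] at h2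
      rw [if_neg (by omega), if_pos (by omega)] at h2
      exact h2 rfl

lemma wrd_descents {n k c : ℕ} (hk2 : 2 ≤ k) (hkn : k < n) (hc : c + 2 ≤ k) :
    descents (wrd n k c) = 1 := by
  have hkn' : k ≤ n := hkn.le
  rw [descents, wrd_length hkn']
  have : (Finset.range (n - 1)).filter
      (fun i => (wrd n k c).getD (i + 1) 0 < (wrd n k c).getD i 0) = {k - 1} := by
    ext i
    simp only [Finset.mem_filter, Finset.mem_range, Finset.mem_singleton]
    rw [wrd_getD hkn', wrd_getD hkn']
    constructor
    · rintro ⟨hi, hlt⟩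
      by_contra hne
      rcases lt_or_gt_of_ne hne with h | h
      · rw [if_pos (by omega), if_pos (by omega)] at hlt; omega
      · rw [if_neg (by omega), if_pos (by omega), if_neg (by omega), if_pos (by omega)] at hlt
        omega
    · rintro rfl
      refine ⟨by omega, ?_⟩
      split_ifs <;> omega
  rw [this, Finset.card_singleton]

lemma CW_descents_pos {n : ℕ} {w : List ℕ} (hw : w ∈ CW n (· ≥ ·) (· ≠ ·))
    (hd : descents w ≠ 0) : ∃ k c, 2 ≤ k ∧ k < n ∧ c + 2 ≤ k ∧ w = wrd n k c := by
  obtain ⟨hlen, ⟨h0, hstep⟩, havoid⟩ := hw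
  rw [AvoidsPair, hlen] at havoid
  rw [hlen] at h0 hstep
  classical
  set f : ℕ → ℕ := fun i => w.getD i 0 with hf
  have hn1 : 1 ≤ n := by
    by_contra h
    apply hd
    rw [descents, hlen]
    have : n - 1 = 0 := by omega
    simp [this]
  have hdesc : ∃ i, i + 1 < n ∧ f (i + 1) ≤ f i := by
    rw [descents, hlen, Finset.card_ne_zero, Finset.filter_nonempty_iff] at hd
    obtain ⟨i, hi, hlt⟩ := hd
    rw [Finset.mem_range] at hi
    exact ⟨i, by omega, le_of_lt hlt⟩
  let j := Nat.find hdesc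
  obtain ⟨hj1, hj2⟩ : j + 1 < n ∧ f (j + 1) ≤ f j := Nat.find_spec hdesc
  have hmin : ∀ i, i < j → ¬(i + 1 < n ∧ f (i + 1) ≤ f i) := fun i hi => Nat.find_min hdesc hi
  have hincr : ∀ i, i ≤ j → f i = i := by
    intro i hi
    induction i with
    | zero => exact h0 (by omega)
    | succ m ih =>
      have hm : ¬(m + 1 < n ∧ f (m + 1) ≤ f m) := hmin m (by omega)
      have h1 : f (m + 1) ≤ f m + 1 := hstep m (by omega)
      have h2 : f m = m := ih (by omega)
      omega
  have hconst : ∀ t, j + 1 + t < n → f (j + 1 + t) = f (j + 1) ∧ f (j + 1 + t) ≤ f (j + t) := by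
    intro t
    induction t with
    | zero => exact fun _ => ⟨rfl, hj2⟩
    | succ m ih =>
      intro hm
      obtain ⟨ih1, ih2⟩ := ih (by omega)
      have e2 : j + 1 + m = j + m + 1 := by omega
      have ih2' : f (j + m + 1) ≤ f (j + m) := by rw [← e2]; exact ih2
      have heq : f (j + m + 2) = f (j + m + 1) := by
        by_contra hne
        exact havoid (j + m) (by omega) ⟨ih2', fun h => hne h.symm⟩
      have e1 : j + 1 + (m + 1) = j + m + 2 := by omega
      have e3 : j + (m + 1) = j + m + 1 := by omega
      constructor
      · rw [e1, heq, ← e2, ih1]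
      · rw [e1, heq, e3]
  have hjj : f j = j := hincr j le_rfl
  have hlt : f (j + 1) < j := by
    rcases lt_or_eq_of_le hj2 with h | h
    · omega
    · exfalso
      apply hd
      rw [descents, hlen, Finset.card_eq_zero, Finset.filter_eq_empty_iff]
      intro i hi
      rw [Finset.mem_range] at hi
      simp only [not_lt]
      show f i ≤ f (i + 1)
      rcases lt_trichotomy i j with hij | rfl | hij
      · rw [hincr i (by omega), hincr (i + 1) (by omega)]; omega
      · rw [h]
      · have v1 : f i = f (j + 1) := by
          have e : i = j + 1 + (i - j - 1) := by omega
          rw [e]; exact (hconst _ (by omega)).1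
        have v2 : f (i + 1) = f (j + 1) := by
          have e' : i + 1 = j + 1 + (i - j) := by omega
          rw [e']; exact (hconst _ (by omega)).1
        omega
  refine ⟨j + 1, f (j + 1), by omega, by omega, by omega, ?_⟩
  have hwl : (wrd n (j + 1) (f (j + 1))).length = n := wrd_length (by omega)
  apply List.ext_getElem (by omega)
  intro i hi1 hi2
  have hin : i < n := by omega
  have hgd : w[i]'hi1 = f i := by
    show _ = w.getD i 0
    rw [List.getD_eq_getElem?_getD, List.getElem?_eq_getElem hi1]
    rfl
  have hgd2 : (wrd n (j + 1) (f (j + 1)))[i]'hi2 = (wrd n (j + 1) (f (j + 1))).getD i 0 := by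
    rw [List.getD_eq_getElem?_getD, List.getElem?_eq_getElem hi2]
    rfl
  rw [hgd, hgd2, wrd_getD (by omega : j + 1 ≤ n)]
  split_ifs with h1 h2
  · exact hincr i (by omega)
  · have e : i = j + 1 + (i - j - 1) := by omega
    rw [e]; exact (hconst _ (by omega)).1

lemma sum_aux (m : ℕ) : ∑ a ∈ Finset.range m, (a + 1) = (m + 1).choose 2 := by
  induction m with
  | zero => rfl
  | succ k ih =>
    rw [Finset.sum_range_succ, ih]
    have h : (k + 1 + 1).choose 2 = (k + 1).choose 1 + (k + 1).choose 2 := Nat.choose_succ_succ (k + 1) 1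
    rw [Nat.choose_one_right] at h
    omega

theorem stmt_18 (n : ℕ) (hn : 1 ≤ n) :
    ∑ᶠ w ∈ CW n (· ≥ ·) (· ≠ ·), descents w = (n - 1).choose 2 := by
  classical
  set P : Finset (ℕ × ℕ) :=
    (Finset.range n ×ˢ Finset.range n).filter (fun p => p.1 + 3 ≤ n ∧ p.2 ≤ p.1) with hP
  have hPmem : ∀ p : ℕ × ℕ, p ∈ P ↔ p.1 + 3 ≤ n ∧ p.2 ≤ p.1 := by
    intro p
    rw [hP, Finset.mem_filter, Finset.mem_product, Finset.mem_range, Finset.mem_range]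
    constructor
    · tauto
    · intro h; exact ⟨⟨by omega, by omega⟩, h⟩
  set g : ℕ × ℕ → List ℕ := fun p => wrd n (p.1 + 2) p.2 with hg
  have hinj : Set.InjOn g P := by
    intro p hp q hq hpq
    rw [Finset.mem_coe, hPmem] at hp hq
    have hgd : ∀ i, (wrd n (p.1 + 2) p.2).getD i 0 = (wrd n (q.1 + 2) q.2).getD i 0 := by
      intro i; rw [show wrd n (p.1 + 2) p.2 = g p from rfl, hpq]
    have h1 := hgd (p.1 + 2)
    have h2 := hgd (q.1 + 2)
    rw [wrd_getD (by omega), wrd_getD (by omega)] at h1 h2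
    have hkk : p.1 = q.1 := by
      rcases lt_trichotomy p.1 q.1 with h | h | h
      · rw [if_neg (by omega), if_pos (by omega), if_pos (by omega)] at h1; omega
      · exact h
      · rw [if_pos (by omega), if_neg (by omega), if_pos (by omega)] at h2; omega
    have hcc : p.2 = q.2 := by
      rw [if_neg (by omega), if_pos (by omega), if_neg (by omega), if_pos (by omega)] at h1
      exact h1
    exact Prod.ext hkk hcc
  set t : Finset (List ℕ) := P.image g with ht
  rw [finsum_mem_eq_sum_of_inter_support_eq descents (t := t) ?_]
  · rw [Finset.sum_image (fun p hp q hq => hinj hp hq)]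
    have hone : ∀ p ∈ P, descents (g p) = 1 := by
      intro p hp
      rw [hPmem] at hp
      exact wrd_descents (by omega) (by omega) (by omega)
    rw [Finset.sum_congr rfl hone, Finset.sum_const, smul_eq_mul, mul_one]
    -- card of P
    have hcard : P.card = ∑ a ∈ Finset.range n, ∑ b ∈ Finset.range n,
        (if a + 3 ≤ n ∧ b ≤ a then 1 else 0) := by
      rw [hP, Finset.card_filter, Finset.sum_product]
    rw [hcard]
    have hinner : ∀ a ∈ Finset.range n, (∑ b ∈ Finset.range n,
        (if a + 3 ≤ n ∧ b ≤ a then 1 else 0)) = if a < n - 2 then a + 1 else 0 := by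
      intro a _
      by_cases ha : a + 3 ≤ n
      · rw [if_pos (by omega)]
        have : ∀ b, (if a + 3 ≤ n ∧ b ≤ a then 1 else 0) = if b ≤ a then 1 else 0 := by
          intro b; by_cases hb : b ≤ a <;> simp [hb, ha]
        simp_rw [this]
        rw [← Finset.card_filter]
        have hfe : (Finset.range n).filter (fun b => b ≤ a) = Finset.range (a + 1) := by
          ext b; simp only [Finset.mem_filter, Finset.mem_range]; omega
        rw [hfe, Finset.card_range]
      · rw [if_neg (by omega)]
        have : ∀ b, (if a + 3 ≤ n ∧ b ≤ a then 1 else 0) = 0 := by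
          intro b; simp [ha]
        simp_rw [this, Finset.sum_const_zero]
    rw [Finset.sum_congr rfl hinner, ← Finset.sum_filter]
    have : (Finset.range n).filter (fun a => a < n - 2) = Finset.range (n - 2) := by
      ext a; simp only [Finset.mem_filter, Finset.mem_range]; omega
    rw [this, sum_aux]
    rcases (by omega : n - 2 + 1 = n - 1 ∨ n = 1) with h | h
    · rw [h]
    · subst h; rfl
  · -- support equality
    apply Set.eq_of_subset_of_subset
    · rintro w ⟨hw, hsup⟩
      rw [Function.mem_support] at hsup
      obtain ⟨k, c, hk2, hkn, hc, rfl⟩ := CW_descents_pos hw hsup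
      refine ⟨?_, hsup⟩
      rw [Finset.coe_image]
      exact ⟨(k - 2, c), by rw [Finset.mem_coe, hPmem]; constructor <;> omega,
        by simp only [hg]; congr 1 <;> omega⟩
    · rintro w ⟨hw, hsup⟩
      refine ⟨?_, hsup⟩
      rw [Finset.coe_image] at hw
      obtain ⟨p, hp, rfl⟩ := hw
      rw [Finset.mem_coe, hPmem] at hp
      exact wrd_mem_CW (by omega) (by omega) (by omega)
end
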